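/- Given two planar poses s₀ = (x₀, ψ₀) and s₁ = (x₁, ψ₁) with ψ₁ − ψ₀ ≢ 0 (mod 2π) and x₀ ≠ x₁, there exists a unique constant body-frame velocity (v, ω), up to positive time scaling, such that the trajectory generated by this velocity starting at s₀ reaches s₁ at time 1; i.e., the arc connecting two poses is uniquely determined. -/

import Mathlib

/-!
At time 1 the heading is `ψ₀ + ω = ψ₁`, which forces `ω = ψ₁ - ψ₀`. For fixed `ω` the
endpoint is `x₀ + M v` with `M = ∫₀¹ Rot(ωt + ψ₀) dt`, a rotation-scaling matrix
`[[C, -S], [S, C]]`. Its determinant is `C² + S² = (2 - 2 cos ω) / ω²`, nonzero exactly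
when `ω ∉ 2πℤ`, so `v = M⁻¹ (x₁ - x₀)` is the unique solution.
-/

open intervalIntegral

lemma integral_cos_mul_add_zero_one {ω : ℝ} (hω : ω ≠ 0) (ψ : ℝ) :
    ∫ t in (0:ℝ)..1, Real.cos (ω * t + ψ) = (Real.sin (ω + ψ) - Real.sin ψ) / ω := by
  rw [integral_comp_mul_add Real.cos hω ψ]
  simp [integral_cos, div_eq_inv_mul]

lemma integral_sin_mul_add_zero_one {ω : ℝ} (hω : ω ≠ 0) (ψ : ℝ) :
    ∫ t in (0:ℝ)..1, Real.sin (ω * t + ψ) = (Real.cos ψ - Real.cos (ω + ψ)) / ω := by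
  rw [integral_comp_mul_add Real.sin hω ψ]
  simp [integral_sin, div_eq_inv_mul, mul_sub]

lemma sq_integral_cos_add_sq_integral_sin {ω : ℝ} (hω : ω ≠ 0) (ψ : ℝ) :
    (∫ t in (0:ℝ)..1, Real.cos (ω * t + ψ)) ^ 2 +
      (∫ t in (0:ℝ)..1, Real.sin (ω * t + ψ)) ^ 2 = (2 - 2 * Real.cos ω) / ω ^ 2 := by
  rw [integral_cos_mul_add_zero_one hω, integral_sin_mul_add_zero_one hω, div_pow, div_pow,
    ← add_div]
  congr 1
  have h := Real.cos_sub (ω + ψ) ψ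
  rw [add_sub_cancel_right] at h
  nlinarith [Real.sin_sq_add_cos_sq (ω + ψ), Real.sin_sq_add_cos_sq ψ]

lemma sq_integral_cos_add_sq_integral_sin_ne_zero {ω : ℝ} (hω : ∀ k : ℤ, ω ≠ 2 * Real.pi * k)
    (ψ : ℝ) :
    (∫ t in (0:ℝ)..1, Real.cos (ω * t + ψ)) ^ 2 +
      (∫ t in (0:ℝ)..1, Real.sin (ω * t + ψ)) ^ 2 ≠ 0 := by
  have hω₀ : ω ≠ 0 := by simpa using hω 0
  have hcos : Real.cos ω ≠ 1 := fun h ↦ by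
    obtain ⟨k, hk⟩ := (Real.cos_eq_one_iff ω).mp h
    exact hω k (by rw [← hk]; ring)
  rw [sq_integral_cos_add_sq_integral_sin hω₀]
  exact div_ne_zero (fun h ↦ hcos (by linarith)) (pow_ne_zero 2 hω₀)

section IntegralLinearCombination

variable {f g : ℝ → ℝ} {a b : ℝ}

lemma integral_mul_const_sub_mul_const (hf : IntervalIntegrable f MeasureTheory.volume a b)
    (hg : IntervalIntegrable g MeasureTheory.volume a b) (c d : ℝ) :
    ∫ t in a..b, (f t * c - g t * d) = (∫ t in a..b, f t) * c - (∫ t in a..b, g t) * d := by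
  rw [integral_sub (hf.mul_const c) (hg.mul_const d), integral_mul_const,
    integral_mul_const]

lemma integral_mul_const_add_mul_const (hf : IntervalIntegrable f MeasureTheory.volume a b)
    (hg : IntervalIntegrable g MeasureTheory.volume a b) (c d : ℝ) :
    ∫ t in a..b, (f t * c + g t * d) = (∫ t in a..b, f t) * c + (∫ t in a..b, g t) * d := by
  rw [integral_add (hf.mul_const c) (hg.mul_const d), integral_mul_const,
    integral_mul_const]

end IntegralLinearCombination

lemma rotation_scaling_eq_iff {C S a b d₀ d₁ : ℝ} (h : C ^ 2 + S ^ 2 ≠ 0) :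
    (d₀ = C * a - S * b ∧ d₁ = S * a + C * b) ↔
      (a = (C * d₀ + S * d₁) / (C ^ 2 + S ^ 2) ∧ b = (C * d₁ - S * d₀) / (C ^ 2 + S ^ 2)) := by
  constructor
  · rintro ⟨rfl, rfl⟩
    constructor <;> field_simp <;> ring
  · rintro ⟨rfl, rfl⟩
    constructor <;> field_simp <;> ring

lemma euclideanSpace_two_eq_iff (v : EuclideanSpace ℝ (Fin 2)) (a b : ℝ) :
    v = !₂[a, b] ↔ v 0 = a ∧ v 1 = b := by
  constructor
  · rintro rfl
    simp
  · rintro ⟨h₀, h₁⟩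
    ext i
    fin_cases i <;> simp [h₀, h₁]

theorem stmt12_general (x₀ x₁ : EuclideanSpace ℝ (Fin 2)) (ψ₀ ψ₁ : ℝ)
    (hψ : ∀ k : ℤ, ψ₁ - ψ₀ ≠ 2 * Real.pi * k) :
    ∃! vw : EuclideanSpace ℝ (Fin 2) × ℝ,
      ψ₁ = ψ₀ + vw.2 ∧
      x₁ 0 = x₀ 0 + ∫ t in (0:ℝ)..1,
        (Real.cos (vw.2 * t + ψ₀) * vw.1 0 - Real.sin (vw.2 * t + ψ₀) * vw.1 1) ∧
      x₁ 1 = x₀ 1 + ∫ t in (0:ℝ)..1,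
        (Real.sin (vw.2 * t + ψ₀) * vw.1 0 + Real.cos (vw.2 * t + ψ₀) * vw.1 1) := by
  set ω := ψ₁ - ψ₀
  set C := ∫ t in (0:ℝ)..1, Real.cos (ω * t + ψ₀)
  set S := ∫ t in (0:ℝ)..1, Real.sin (ω * t + ψ₀)
  have hCS : C ^ 2 + S ^ 2 ≠ 0 := sq_integral_cos_add_sq_integral_sin_ne_zero hψ ψ₀
  set d₀ := x₁ 0 - x₀ 0
  set d₁ := x₁ 1 - x₀ 1
  set v := !₂[(C * d₀ + S * d₁) / (C ^ 2 + S ^ 2), (C * d₁ - S * d₀) / (C ^ 2 + S ^ 2)]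
  refine (existsUnique_congr fun vw ↦ ?_).2 (existsUnique_eq (a' := (v, ω)))
  obtain ⟨u, w⟩ := vw
  have hψw : ψ₁ = ψ₀ + w ↔ w = ω := by constructor <;> intro h <;> linarith
  have hcos : IntervalIntegrable (fun t ↦ Real.cos (ω * t + ψ₀)) MeasureTheory.volume 0 1 :=
    (by fun_prop : Continuous fun t : ℝ ↦ Real.cos (ω * t + ψ₀)).intervalIntegrable 0 1
  have hsin : IntervalIntegrable (fun t ↦ Real.sin (ω * t + ψ₀)) MeasureTheory.volume 0 1 :=
    (by fun_prop : Continuous fun t : ℝ ↦ Real.sin (ω * t + ψ₀)).intervalIntegrable 0 1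
  rw [Prod.mk.injEq, euclideanSpace_two_eq_iff, hψw, and_comm (b := w = ω)]
  refine and_congr_right fun hw ↦ ?_
  subst hw
  rw [integral_mul_const_sub_mul_const hcos hsin, integral_mul_const_add_mul_const hsin hcos,
    ← sub_eq_iff_eq_add', ← sub_eq_iff_eq_add']
  exact rotation_scaling_eq_iff hCS

/-- Two planar poses with non-congruent orientations and distinct positions are
connected by a unique constant body-frame velocity reaching the goal at time 1. -/
theorem stmt12 (x₀ x₁ : EuclideanSpace ℝ (Fin 2)) (ψ₀ ψ₁ : ℝ)
    (hψ : ∀ k : ℤ, ψ₁ - ψ₀ ≠ 2 * Real.pi * k) (hx : x₀ ≠ x₁) :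
    ∃! vw : EuclideanSpace ℝ (Fin 2) × ℝ,
      ψ₁ = ψ₀ + vw.2 ∧
      x₁ 0 = x₀ 0 + ∫ t in (0:ℝ)..1,
        (Real.cos (vw.2 * t + ψ₀) * vw.1 0 - Real.sin (vw.2 * t + ψ₀) * vw.1 1) ∧
      x₁ 1 = x₀ 1 + ∫ t in (0:ℝ)..1,
        (Real.sin (vw.2 * t + ψ₀) * vw.1 0 + Real.cos (vw.2 * t + ψ₀) * vw.1 1) :=
  stmt12_general x₀ x₁ ψ₀ ψ₁ hψ
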